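/- Let λ > 0 and n ≥ 2, let x ∈ ℝ^{n-1}, ν > 0, and for ξ ∈ ℝ^{n-1} \ {x} set ξ^{x,ν} = x + ν²(ξ−x)/|ξ−x|². Then for all ξ, z ∈ ℝ^{n-1} with |ξ−x| > ν and |z−x| > ν, the kernel k(x,ν;ξ,z) = (|ξ−x|/ν)^λ |ξ^{x,ν} − z|^λ − |ξ − z|^λ is strictly positive. -/

import Mathlib

/-!
For the inversion `ξ*` of `ξ` in the sphere of radius `ν` about `x`, expanding the squares gives
`(|ξ - x| / ν)² |ξ* - z|² = |ξ - z|² + (|ξ - x|² / ν² - 1) (|z - x|² - ν²)`.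
The correction term is positive when `ξ` and `z` both lie outside the sphere, and `t ↦ t ^ λ`
is strictly increasing for `λ > 0`.
-/

open EuclideanGeometry

variable {V P : Type*} [NormedAddCommGroup V] [InnerProductSpace ℝ V] [MetricSpace P]
  [NormedAddTorsor V P]

theorem sq_mul_dist_inversion_sq_eq {c x y : P} {R : ℝ} (hR : R ≠ 0) (hx : x ≠ c) :
    (dist x c / R) ^ 2 * dist (inversion c R x) y ^ 2 =
      dist x y ^ 2 + ((dist x c / R) ^ 2 - 1) * (dist y c ^ 2 - R ^ 2) := by
  have hd : ‖x -ᵥ c‖ ≠ 0 := dist_eq_norm_vsub V x c ▸ dist_ne_zero.2 hx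
  have hinv : inversion c R x -ᵥ y = (R / dist x c) ^ 2 • (x -ᵥ c) - (y -ᵥ c) := by
    rw [← inversion_vsub_center, vsub_sub_vsub_cancel_right]
  have hxy : x -ᵥ y = (x -ᵥ c) - (y -ᵥ c) := (vsub_sub_vsub_cancel_right x y c).symm
  rw [dist_eq_norm_vsub V (inversion c R x), hinv, dist_eq_norm_vsub V x y, hxy,
    dist_eq_norm_vsub V y c, dist_eq_norm_vsub V x c, norm_sub_sq_real, norm_sub_sq_real,
    norm_smul, Real.norm_of_nonneg (sq_nonneg _), real_inner_smul_left]
  field_simp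
  ring

theorem dist_lt_mul_dist_inversion {c x y : P} {R : ℝ} (hR : 0 < R) (hx : R < dist x c)
    (hy : R < dist y c) : dist x y < dist x c / R * dist (inversion c R x) y := by
  have hxc : x ≠ c := dist_pos.1 (hR.trans hx)
  have hscale : 1 < (dist x c / R) ^ 2 := one_lt_pow₀ ((one_lt_div hR).2 hx) two_ne_zero
  have hy2 : R ^ 2 < dist y c ^ 2 := pow_lt_pow_left₀ hy hR.le two_ne_zero
  refine lt_of_pow_lt_pow_left₀ 2 (by positivity) ?_
  rw [mul_pow, sq_mul_dist_inversion_sq_eq hR.ne' hxc]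
  nlinarith [mul_pos (sub_pos.2 hscale) (sub_pos.2 hy2)]

theorem kernel_positive_general (n : ℕ) (lam ν : ℝ) (hlam : 0 < lam) (hν : 0 < ν)
    (x ξ z : EuclideanSpace ℝ (Fin (n - 1))) (hξ : ν < ‖ξ - x‖) (hz : ν < ‖z - x‖) :
    0 < (‖ξ - x‖ / ν) ^ lam * ‖(x + (ν ^ 2 / ‖ξ - x‖ ^ 2) • (ξ - x)) - z‖ ^ lam
        - ‖ξ - z‖ ^ lam := by
  have hkelvin : x + (ν ^ 2 / ‖ξ - x‖ ^ 2) • (ξ - x) = inversion x ν ξ := by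
    rw [inversion, dist_eq_norm, div_pow, vadd_eq_add, vsub_eq_sub, add_comm]
  rw [← dist_eq_norm] at hξ hz
  rw [hkelvin, ← dist_eq_norm, ← dist_eq_norm, ← dist_eq_norm,
    ← Real.mul_rpow (div_nonneg dist_nonneg hν.le) dist_nonneg, sub_pos]
  exact Real.rpow_lt_rpow dist_nonneg (dist_lt_mul_dist_inversion hν hξ hz) hlam

theorem kernel_positive (n : ℕ) (hn : 2 ≤ n) (lam ν : ℝ) (hlam : 0 < lam) (hν : 0 < ν)
    (x ξ z : EuclideanSpace ℝ (Fin (n - 1))) (hξ : ν < ‖ξ - x‖) (hz : ν < ‖z - x‖) :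
    0 < (‖ξ - x‖ / ν) ^ lam * ‖(x + (ν ^ 2 / ‖ξ - x‖ ^ 2) • (ξ - x)) - z‖ ^ lam
        - ‖ξ - z‖ ^ lam :=
  kernel_positive_general n lam ν hlam hν x ξ z hξ hz
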